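/- Suppose 1 ≤ j ≤ k and z > 0 is a common root of the consecutive radicands R_{j,k} and R_{j+1,k} (with R_{1,k}(z) = 1 - 4kz^2 and R_{i,k}(z) = 1 - 4(k-i+1)z^2 - 2z + 2z·sqrt(R_{i-1,k}(z))). Then z = 1/(1 + sqrt(1 + 4(k-j))), and for all 0 ≤ p < j, R_{j-p,k}(z) = 4·α_p·z^2, where α_0 = 0 and α_p = (α_{p-1} + p)^2. -/
import Mathlib


open Real

noncomputable def Rbh (k : ℕ) : ℕ → ℝ → ℝ
  | 0, _ => 1
  | 1, z => 1 - 4 * (k : ℝ) * z ^ 2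
  | i + 2, z => 1 - 4 * ((k : ℝ) - ((i : ℝ) + 2) + 1) * z ^ 2 - 2 * z
      + 2 * z * Real.sqrt (Rbh k (i + 1) z)

/-- `α₀ = 0`, `α_p = (α_{p-1} + p)²`. -/
def alphaSeq : ℕ → ℕ
  | 0 => 0
  | p + 1 => (alphaSeq p + (p + 1)) ^ 2

theorem common_root_of_consecutive_radicands (k j : ℕ) (hj1 : 1 ≤ j)
    (hjk : j ≤ k) (z : ℝ) (hz : 0 < z)
    (hdef : ∀ i : ℕ, 1 ≤ i → i < j → 0 ≤ Rbh k i z)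
    (hrootj : Rbh k j z = 0) (hrootj1 : Rbh k (j + 1) z = 0) :
    z = 1 / (1 + Real.sqrt (1 + 4 * ((k : ℝ) - (j : ℝ)))) ∧
    ∀ p : ℕ, p < j → Rbh k (j - p) z = 4 * (alphaSeq p : ℝ) * z ^ 2 := by
  obtain ⟨j', rfl⟩ : ∃ j', j = j' + 1 := ⟨j - 1, (Nat.succ_pred_eq_of_pos hj1).symm⟩
  have hm0 : (0:ℝ) ≤ (k : ℝ) - ((j' : ℝ) + 1) := by
    have : ((j' : ℝ) + 1) ≤ (k : ℝ) := by exact_mod_cast hjk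
    linarith
  set m : ℝ := (k : ℝ) - ((j' : ℝ) + 1) with hmdef
  have hs : Real.sqrt (1 + 4 * m) ^ 2 = 1 + 4 * m := Real.sq_sqrt (by linarith)
  have hs1 : (1:ℝ) ≤ Real.sqrt (1 + 4 * m) := by
    nlinarith [Real.sqrt_nonneg (1 + 4 * m), hs]
  -- key equation
  have heq : 1 - 4 * m * z ^ 2 - 2 * z = 0 := by
    have h1 := hrootj1
    show 1 - 4 * ((k : ℝ) - ((j' : ℝ) + 1)) * z ^ 2 - 2 * z = 0
    simp only [Rbh] at h1
    rw [hrootj, Real.sqrt_zero] at h1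
    linarith
  constructor
  · have hfac : (z * (Real.sqrt (1 + 4 * m) + 1) - 1) *
        (z * (Real.sqrt (1 + 4 * m) - 1) + 1) = 0 := by nlinarith [hs, heq]
    have hpos : 0 < z * (Real.sqrt (1 + 4 * m) - 1) + 1 := by nlinarith
    have hz1 : z * (Real.sqrt (1 + 4 * m) + 1) = 1 := by
      rcases mul_eq_zero.mp hfac with h | h
      · linarith
      · linarith
    have hcast : 1 + 4 * ((k : ℝ) - ((j' + 1 : ℕ) : ℝ)) = 1 + 4 * m := by
      push_cast [hmdef]; ring
    rw [hcast, eq_div_iff (by positivity)]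
    linarith
  · intro p
    induction p with
    | zero =>
      intro _
      simpa [alphaSeq] using hrootj
    | succ p ih =>
      intro hp
      have ihv := ih (by omega)
      obtain ⟨q, hq⟩ : ∃ q, j' = p + 1 + q := ⟨j' - (p + 1), by omega⟩
      subst hq
      have e1 : p + 1 + q + 1 - p = q + 2 := by omega
      have e2 : p + 1 + q + 1 - (p + 1) = q + 1 := by omega
      rw [e1] at ihv
      rw [e2]
      have hnn : 0 ≤ Rbh k (q + 1) z := hdef (q + 1) (by omega) (by omega)
      have hmq : (k : ℝ) - ((q : ℝ) + 2) + 1 = m + (p : ℝ) + 1 := by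
        rw [hmdef]; push_cast; ring
      simp only [Rbh, hmq] at ihv
      set S := Real.sqrt (Rbh k (q + 1) z) with hS
      have h2 : 2 * z * S = 2 * z * (2 * z * ((alphaSeq p : ℝ) + (p : ℝ) + 1)) := by
        nlinarith [ihv, heq]
      have hSv : S = 2 * z * ((alphaSeq p : ℝ) + (p : ℝ) + 1) :=
        mul_left_cancel₀ (by positivity) h2
      have : Rbh k (q + 1) z = S ^ 2 := (Real.sq_sqrt hnn).symm
      rw [this, hSv, show alphaSeq (p + 1) = (alphaSeq p + (p + 1)) ^ 2 from rfl]
      push_cast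
      ring
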